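/- arXiv:math/0207203 — 3 statements merged into one kernel-verified Lean document; each statement's English description precedes it below -/
import Mathlib

section
/- Let p, q be coprime positive integers with p > q, and let q/p = [a_0, a_1, ..., a_n] be the (unique) continued fraction expansion with a_0 ≥ 0, a_i > 0 for 1 ≤ i ≤ n, and a_n > 1. If n is odd, then (pq-1)/p^2 = [a_0, a_1, ..., a_{n-1}, a_n+1, a_n-1, a_{n-1}, a_{n-2}, ..., a_2, a_1]; if n is even, then (pq-1)/p^2 = [a_0, a_1, ..., a_{n-1}, a_n-1, a_n+1, a_{n-1}, a_{n-2}, ..., a_2, a_1]. -/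
/-- Continued fraction value: `cf [a₀, a₁, ..., aₙ] = a₀ + 1/(a₁ + 1/(... + 1/aₙ))`. -/
def cf : List ℤ → ℚ
  | [] => 0
  | [a] => (a : ℚ)
  | a :: l => (a : ℚ) + (cf l)⁻¹

/-- Auxiliary for the Bredon–Wood sum: carries previous `a`, previous `b`,
and the partial sum of the `b`'s. -/
def NsumAux : ℤ → ℤ → ℤ → List ℤ → ℤ
  | _, _, s, [] => s
  | pa, pb, s, a :: l =>
      NsumAux a (if pb = pa ∧ Even s then 0 else a)
        (s + (if pb = pa ∧ Even s then 0 else a)) l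

/-- `Nsum [a₀,...,aₙ] = b₀ + ... + bₙ` where `b₀ = a₀` and
`bᵢ = 0` if `bᵢ₋₁ = aᵢ₋₁` and `b₀ + ... + bᵢ₋₁` is even, else `bᵢ = aᵢ`.
The Bredon–Wood invariant is `N(x,y) = Nsum l / 2` for `l` the continued
fraction expansion of `x/y`. -/
def Nsum : List ℤ → ℤ
  | [] => 0
  | a :: l => NsumAux a a a l

/-- A valid continued fraction expansion: nonempty, `a₀ ≥ 0`,
`aᵢ > 0` for `i ≥ 1`, and the last term `> 1`. -/
def ValidCF (l : List ℤ) : Prop :=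
  l ≠ [] ∧ 0 ≤ l.headI ∧ (∀ a ∈ l.tail, 0 < a) ∧ 1 < l.getLast!

/-! With `M l = ∏ !![aᵢ, 1; 1, 0]`, the value `cf l` is the ratio of the two entries of the first
column of `M l`, `det (M l) = ±1`, and `M l.reverse = (M l)ᵀ`. For `s = ±1` one has
`M [b + s, b - s] = M [b] * K * M [b]` with `K = !![1, -s; s, 0]`, so the matrix of the new
expansion is `X * K * Yᵀ`, where `X = M [a₀, …, aₙ] = !![q, *; p, *]` and `Y = M [a₁, …, aₙ]` has
the second row of `X` as its first row. Its first column is `(pq - s * det X, p²)`, and the parity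
condition on `n` is exactly `s * det X = 1`. -/

open Matrix

def cfMatrix : List ℤ → Matrix (Fin 2) (Fin 2) ℤ
  | [] => 1
  | a :: l => !![a, 1; 1, 0] * cfMatrix l

theorem cfMatrix_cons (a : ℤ) (l : List ℤ) : cfMatrix (a :: l) = !![a, 1; 1, 0] * cfMatrix l :=
  rfl

theorem cfMatrix_singleton (a : ℤ) : cfMatrix [a] = !![a, 1; 1, 0] := mul_one _

theorem cfMatrix_append (l m : List ℤ) : cfMatrix (l ++ m) = cfMatrix l * cfMatrix m := by
  induction l with
  | nil => simp [cfMatrix]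
  | cons a l ih => simp [cfMatrix_cons, ih]

theorem cfMatrix_reverse (l : List ℤ) : cfMatrix l.reverse = (cfMatrix l)ᵀ := by
  induction l with
  | nil => simp [cfMatrix]
  | cons a l ih =>
    have hsymm : (!![a, 1; 1, 0])ᵀ = !![a, 1; 1, 0] := by
      ext i j; fin_cases i <;> fin_cases j <;> rfl
    rw [List.reverse_cons, cfMatrix_append, ih, cfMatrix_singleton, cfMatrix_cons,
      transpose_mul, hsymm]

theorem det_cfMatrix (l : List ℤ) : (cfMatrix l).det = (-1) ^ l.length := by
  induction l with
  | nil => simp [cfMatrix]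
  | cons a l ih =>
    rw [cfMatrix_cons, det_mul, ih, det_fin_two_of, List.length_cons, pow_succ]
    ring

theorem cfMatrix_cons_apply_one_zero (a : ℤ) (l : List ℤ) :
    cfMatrix (a :: l) 1 0 = cfMatrix l 0 0 := by
  simp [cfMatrix_cons, mul_apply, Fin.sum_univ_two]

theorem isCoprime_cfMatrix (l : List ℤ) : IsCoprime (cfMatrix l 0 0) (cfMatrix l 1 0) := by
  have hdet := det_cfMatrix l
  rw [det_fin_two] at hdet
  have hsq : ((-1 : ℤ) ^ l.length) * (-1) ^ l.length = 1 := by rw [← mul_pow]; norm_num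
  exact ⟨(-1) ^ l.length * cfMatrix l 1 1, -((-1) ^ l.length * cfMatrix l 0 1),
    by linear_combination (-1) ^ l.length * hdet + hsq⟩

theorem cfMatrix_pos_nonneg {l : List ℤ} (hl : ∀ x ∈ l, 0 < x) :
    0 < cfMatrix l 0 0 ∧ ∀ i j, 0 ≤ cfMatrix l i j := by
  induction l with
  | nil =>
    exact ⟨by simp [cfMatrix], fun i j => by fin_cases i <;> fin_cases j <;> simp [cfMatrix]⟩
  | cons c l ih =>
    obtain ⟨h00, hnn⟩ := ih fun x hx => hl x (List.mem_cons_of_mem c hx)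
    have hc : 0 < c := hl c List.mem_cons_self
    have h10 := hnn 1 0
    have h01 := hnn 0 1
    have h11 := hnn 1 1
    refine ⟨?_, fun i j => ?_⟩
    · simp [cfMatrix_cons, mul_apply, Fin.sum_univ_two]
      nlinarith
    · fin_cases i <;> fin_cases j <;> simp [cfMatrix_cons, mul_apply, Fin.sum_univ_two] <;>
        nlinarith

theorem cf_cons_eq_div (a : ℤ) {t : List ℤ} (ht : ∀ x ∈ t, 0 < x) :
    cf (a :: t) = cfMatrix (a :: t) 0 0 / cfMatrix (a :: t) 1 0 := by
  induction t generalizing a with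
  | nil => simp [cf, cfMatrix_singleton]
  | cons c t ih =>
    have hpos : (0 : ℚ) < cfMatrix (c :: t) 0 0 := by exact_mod_cast (cfMatrix_pos_nonneg ht).1
    have hcf : cf (a :: c :: t) = a + (cf (c :: t))⁻¹ := rfl
    rw [hcf, ih c fun x hx => ht x (List.mem_cons_of_mem c hx), cfMatrix_cons a]
    simp only [mul_apply, Fin.sum_univ_two, of_apply, cons_val', cons_val_zero, cons_val_one,
      empty_val', cons_val_fin_one]
    push_cast
    field_simp [hpos.ne']
    ring

theorem cfMatrix_pair {b s : ℤ} (hs : s * s = 1) :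
    cfMatrix [b + s, b - s] = cfMatrix [b] * !![1, -s; s, 0] * cfMatrix [b] := by
  rw [cfMatrix_cons, cfMatrix_singleton, cfMatrix_singleton]
  ext i j
  rcases mul_self_eq_one_iff.mp hs with rfl | rfl <;>
    fin_cases i <;> fin_cases j <;> simp [mul_apply, Fin.sum_univ_two] <;> ring

theorem cfMatrix_mirror (a : ℤ) (u : List ℤ) {b s : ℤ} (hs : s * s = 1) :
    cfMatrix (a :: (u ++ [b + s, b - s] ++ u.reverse)) =
      cfMatrix (a :: (u ++ [b])) * !![1, -s; s, 0] * (cfMatrix (u ++ [b]))ᵀ := by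
  have hb : (cfMatrix [b])ᵀ = cfMatrix [b] := by rw [← cfMatrix_reverse, List.reverse_singleton]
  simp only [cfMatrix_cons a, cfMatrix_append, cfMatrix_reverse, cfMatrix_pair hs, transpose_mul,
    hb, Matrix.mul_assoc]

theorem cfMatrix_mirror_apply (a : ℤ) (u : List ℤ) {b s : ℤ} (hs : s * s = 1) :
    cfMatrix (a :: (u ++ [b + s, b - s] ++ u.reverse)) 0 0 =
        cfMatrix (a :: (u ++ [b])) 0 0 * cfMatrix (a :: (u ++ [b])) 1 0 -
          s * (cfMatrix (a :: (u ++ [b]))).det ∧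
      cfMatrix (a :: (u ++ [b + s, b - s] ++ u.reverse)) 1 0 =
        cfMatrix (a :: (u ++ [b])) 1 0 ^ 2 := by
  rw [cfMatrix_mirror a u hs, cfMatrix_cons a]
  generalize cfMatrix (u ++ [b]) = Y
  rw [eta_fin_two Y]
  constructor <;> simp [mul_apply, Fin.sum_univ_two, det_fin_two] <;> ring

theorem cf_mirror {a b : ℤ} {u : List ℤ} {p q : ℕ} (hu : ∀ x ∈ u, 0 < x) (hb : 1 < b)
    (hp : 0 < p) (hcop : Nat.Coprime q p) (hcf : cf (a :: (u ++ [b])) = q / p) :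
    cf (a :: (u ++ [b + (-1) ^ u.length, b - (-1) ^ u.length] ++ u.reverse)) =
      ((p : ℚ) * q - 1) / (p : ℚ) ^ 2 := by
  set s : ℤ := (-1) ^ u.length
  have hs : s * s = 1 := by rw [← mul_pow]; norm_num
  have hs_cases : s = 1 ∨ s = -1 := mul_self_eq_one_iff.mp hs
  have ht : ∀ x ∈ u ++ [b], 0 < x := by
    simp only [List.mem_append, List.mem_singleton]
    rintro x (hx | rfl)
    exacts [hu x hx, by omega]
  have hmirror : ∀ x ∈ u ++ [b + s, b - s] ++ u.reverse, 0 < x := by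
    simp only [List.mem_append, List.mem_cons, List.mem_reverse, List.not_mem_nil, or_false]
    rintro x ((hx | rfl | rfl) | hx)
    exacts [hu x hx, by omega, by omega, hu x hx]
  have hX10 : 0 < cfMatrix (a :: (u ++ [b])) 1 0 := by
    rw [cfMatrix_cons_apply_one_zero]
    exact (cfMatrix_pos_nonneg ht).1
  obtain ⟨hXq, hXp⟩ :
      cfMatrix (a :: (u ++ [b])) 0 0 = q ∧ cfMatrix (a :: (u ++ [b])) 1 0 = p := by
    refine Rat.div_int_inj hX10 (by exact_mod_cast hp) ?_ hcop ?_
    · exact Int.isCoprime_iff_gcd_eq_one.mp (isCoprime_cfMatrix _)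
    · rw [← cf_cons_eq_div a ht, hcf]
      push_cast
      rfl
  have hdet : s * (cfMatrix (a :: (u ++ [b]))).det = 1 := by
    rw [det_cfMatrix, List.length_cons, List.length_append, List.length_singleton, pow_add,
      pow_add]
    linear_combination hs
  obtain ⟨h00, h10⟩ := cfMatrix_mirror_apply a u (b := b) hs
  rw [cf_cons_eq_div a hmirror, h00, h10, hdet, hXq, hXp]
  push_cast
  ring

theorem crosscap_stmt1_general (p q n : ℕ) (a : ℕ → ℤ) (hqp : q < p)
    (hcop : Nat.Coprime p q)
    (hpos : ∀ i, 1 ≤ i → i ≤ n → 0 < a i) (hlast : 1 < a n)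
    (hcf : cf (List.ofFn fun i : Fin (n+1) => a i) = (q : ℚ) / p) :
    (Odd n → cf ((List.ofFn fun i : Fin n => a i) ++ [a n + 1, a n - 1] ++
        (List.ofFn fun i : Fin (n-1) => a (i+1)).reverse) = ((p:ℚ)*q - 1) / (p:ℚ)^2) ∧
    (Even n → cf ((List.ofFn fun i : Fin n => a i) ++ [a n - 1, a n + 1] ++
        (List.ofFn fun i : Fin (n-1) => a (i+1)).reverse) = ((p:ℚ)*q - 1) / (p:ℚ)^2) := by
  have hp : 0 < p := by omega
  obtain ⟨m, rfl⟩ : ∃ m, n = m + 1 := by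
    refine Nat.exists_eq_add_one.mpr (Nat.pos_of_ne_zero fun hn => ?_)
    subst hn
    have hlt : (q : ℚ) / p < 1 := (div_lt_one (by exact_mod_cast hp)).mpr (by exact_mod_cast hqp)
    have hgt : (1 : ℚ) < a 0 := by exact_mod_cast hlast
    simp only [Nat.reduceAdd, List.ofFn_succ, List.ofFn_zero, Fin.val_zero, cf] at hcf
    linarith
  set u := List.ofFn fun i : Fin m => a (i + 1)
  have hu : ∀ x ∈ u, 0 < x := by
    simp only [u, List.mem_ofFn]
    rintro _ ⟨i, rfl⟩
    exact hpos _ (by omega) (by omega)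
  have hinit : (List.ofFn fun i : Fin (m + 1) => a i) = a 0 :: u := by
    simp [List.ofFn_succ, u]
  have hfull : (List.ofFn fun i : Fin (m + 1 + 1) => a i) = a 0 :: (u ++ [a (m + 1)]) := by
    rw [List.ofFn_succ']
    simp only [Fin.val_castSucc, Fin.val_last, hinit, List.concat_eq_append, List.cons_append]
  have key := cf_mirror hu hlast hp hcop.symm (hfull ▸ hcf)
  rw [List.length_ofFn] at key
  simp only [Nat.add_sub_cancel, hinit, List.cons_append]
  constructor
  · intro hodd
    rwa [(Nat.not_odd_iff_even.mp (Nat.odd_add_one.mp hodd)).neg_one_pow] at key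
  · intro heven
    rwa [(Nat.not_even_iff_odd.mp (Nat.even_add_one.mp heven)).neg_one_pow, ← sub_eq_add_neg,
      sub_neg_eq_add] at key

theorem crosscap_stmt1 (p q n : ℕ) (a : ℕ → ℤ) (hq : 0 < q) (hqp : q < p)
    (hcop : Nat.Coprime p q) (h0 : 0 ≤ a 0)
    (hpos : ∀ i, 1 ≤ i → i ≤ n → 0 < a i) (hlast : 1 < a n)
    (hcf : cf (List.ofFn fun i : Fin (n+1) => a i) = (q : ℚ) / p) :
    (Odd n → cf ((List.ofFn fun i : Fin n => a i) ++ [a n + 1, a n - 1] ++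
        (List.ofFn fun i : Fin (n-1) => a (i+1)).reverse) = ((p:ℚ)*q - 1) / (p:ℚ)^2) ∧
    (Even n → cf ((List.ofFn fun i : Fin n => a i) ++ [a n - 1, a n + 1] ++
        (List.ofFn fun i : Fin (n-1) => a (i+1)).reverse) = ((p:ℚ)*q - 1) / (p:ℚ)^2) :=
  crosscap_stmt1_general p q n a hqp hcop hpos hlast hcf
end

section
/- Let p, q be coprime positive integers with pq odd and p > q. Define (p,q) to be of type A if the unique solution x of xq ≡ -1 (mod p) with 0 < x < p is even, and of type B if it is odd. Let q/p = [a_0, ..., a_n] be the continued fraction expansion (a_0 = 0, a_i > 0, a_n > 1) with convergents q_i/p_i. Then: if n is even, (p,q) is of type A if and only if p_{n-1} is even; if n is odd, (p,q) is of type A if and only if p_{n-1} is odd. -/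
/-!
The identity `q_n p_{n-1} - q_{n-1} p_n = (-1)^{n-1}` says that `(-1)^{n-1} p_{n-1}` is an inverse
of `q` modulo `p`, so the solution of `x q ≡ -1 (mod p)` is `x ≡ (-1)^n p_{n-1}`. Since
`0 < p_{n-1} < p`, this gives `x = p_{n-1}` for `n` even and `x = p - p_{n-1}` for `n` odd,
where the oddness of `p` flips the parity.
-/

section Convergents

variable {a P Q : ℕ → ℤ}

theorem convergent_det (hP0 : P 0 = 1) (hQ0 : Q 0 = 0) (hQ1 : Q 1 = 1)
    (hPr : ∀ i, P (i + 2) = a (i + 2) * P (i + 1) + P i)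
    (hQr : ∀ i, Q (i + 2) = a (i + 2) * Q (i + 1) + Q i) (i : ℕ) :
    Q (i + 1) * P i - Q i * P (i + 1) = (-1) ^ i := by
  induction i with
  | zero => simp [hP0, hQ0, hQ1]
  | succ k ih =>
    rw [hPr k, hQr k, pow_succ]
    linear_combination (-1 : ℤ) * ih

theorem convergent_denom_pos {n : ℕ} (hP0 : P 0 = 1) (hP1 : P 1 = a 1)
    (hPr : ∀ i, P (i + 2) = a (i + 2) * P (i + 1) + P i)
    (hpos : ∀ i, 1 ≤ i → i ≤ n → 0 < a i) : ∀ i ≤ n, 0 < P i := by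
  intro i
  induction i using Nat.twoStepInduction with
  | zero => simp [hP0]
  | one => intro h; simpa [hP1] using hpos 1 le_rfl h
  | more k ih1 ih2 =>
    intro h
    rw [hPr k]
    have := hpos (k + 2) (by omega) h
    nlinarith [ih1 (by omega), ih2 (by omega)]

theorem convergent_denom_lt_succ {m : ℕ} (hP0 : P 0 = 1) (hP1 : P 1 = a 1)
    (hPr : ∀ i, P (i + 2) = a (i + 2) * P (i + 1) + P i)
    (hpos : ∀ i, 1 ≤ i → i ≤ m + 1 → 0 < a i) (hlast : 1 < a (m + 1)) :
    P m < P (m + 1) := by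
  have hPpos := convergent_denom_pos hP0 hP1 hPr hpos
  have hmul : a (m + 1) * P m ≤ P (m + 1) := by
    cases m with
    | zero => simp [hP0, hP1]
    | succ k => rw [hPr k]; linarith [hPpos k (by omega)]
  nlinarith [hPpos m (by omega)]

end Convergents

theorem Int.dvd_add_of_mul_sub_mul_eq_one {p q x y r : ℤ} (hx : p ∣ x * q + 1)
    (hy : q * y - r * p = 1) : p ∣ x + y := by
  obtain ⟨c, hc⟩ := hx
  exact ⟨y * c - x * r, by linear_combination y * hc - x * hy⟩

theorem Int.eq_of_dvd_sub_of_lt {p x y : ℤ} (h : p ∣ x - y) (hx0 : 0 ≤ x) (hx : x < p)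
    (hy0 : 0 ≤ y) (hy : y < p) : x = y :=
  sub_eq_zero.mp (Int.eq_zero_of_abs_lt_dvd h (by rw [abs_lt]; omega))

theorem crosscap_stmt7_general (p q n : ℕ) (a P Q : ℕ → ℤ)
    (hpodd : Odd p)
    (h0 : a 0 = 0) (hpos : ∀ i, 1 ≤ i → i ≤ n → 0 < a i) (hlast : 1 < a n)
    (hP0 : P 0 = 1) (hP1 : P 1 = a 1) (hPr : ∀ i, P (i+2) = a (i+2) * P (i+1) + P i)
    (hQ0 : Q 0 = 0) (hQ1 : Q 1 = 1) (hQr : ∀ i, Q (i+2) = a (i+2) * Q (i+1) + Q i)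
    (hPn : P n = p) (hQn : Q n = q) :
    ∀ x : ℤ, 0 < x → x < p → (p : ℤ) ∣ x * q + 1 →
      (Even n → (Even x ↔ Even (P (n-1)))) ∧
      (Odd n → (Even x ↔ Odd (P (n-1)))) := by
  have hn : n ≠ 0 := by rintro rfl; simp [h0] at hlast
  obtain ⟨m, rfl⟩ := Nat.exists_eq_add_one_of_ne_zero hn
  have hdet : (q : ℤ) * P m - Q m * p = (-1) ^ m := by
    rw [← hPn, ← hQn]; linear_combination convergent_det hP0 hQ0 hQ1 hPr hQr m
  have hPm_pos : 0 < P m := convergent_denom_pos hP0 hP1 hPr hpos m (by omega)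
  have hPm_lt : P m < p := hPn ▸ convergent_denom_lt_succ hP0 hP1 hPr hpos hlast
  simp only [Nat.add_sub_cancel, Nat.even_add_one, Nat.odd_add_one, Nat.not_even_iff_odd,
    Nat.not_odd_iff_even]
  intro x hx0 hxp hdvd
  constructor
  · intro hm
    have hx : (p : ℤ) ∣ x - P m := by
      simpa [sub_eq_add_neg] using Int.dvd_add_of_mul_sub_mul_eq_one (y := -P m) (r := -Q m)
        hdvd (by linear_combination -(hdet.trans hm.neg_one_pow))
    rw [Int.eq_of_dvd_sub_of_lt hx hx0.le hxp hPm_pos.le hPm_lt]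
  · intro hm
    have hx : (p : ℤ) ∣ x - (p - P m) := by
      simpa [sub_sub_eq_add_sub] using (Int.dvd_add_of_mul_sub_mul_eq_one (y := P m) (r := Q m)
        hdvd (by linear_combination hdet.trans hm.neg_one_pow)).sub (dvd_refl (p : ℤ))
    have hp_odd : Odd (p : ℤ) := by exact_mod_cast hpodd
    rw [Int.eq_of_dvd_sub_of_lt hx hx0.le hxp (by omega) (by omega), Int.even_sub]
    simp [← Int.not_odd_iff_even, hp_odd]

theorem crosscap_stmt7 (p q n : ℕ) (a P Q : ℕ → ℤ)
    (hq : 0 < q) (hqp : q < p) (hcop : Nat.Coprime p q) (hpodd : Odd p) (hqodd : Odd q)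
    (h0 : a 0 = 0) (hpos : ∀ i, 1 ≤ i → i ≤ n → 0 < a i) (hlast : 1 < a n)
    (hcf : cf (List.ofFn fun i : Fin (n+1) => a i) = (q : ℚ) / p)
    (hP0 : P 0 = 1) (hP1 : P 1 = a 1) (hPr : ∀ i, P (i+2) = a (i+2) * P (i+1) + P i)
    (hQ0 : Q 0 = 0) (hQ1 : Q 1 = 1) (hQr : ∀ i, Q (i+2) = a (i+2) * Q (i+1) + Q i)
    (hPn : P n = p) (hQn : Q n = q) :
    ∀ x : ℤ, 0 < x → x < p → (p : ℤ) ∣ x * q + 1 →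
      (Even n → (Even x ↔ Even (P (n-1)))) ∧
      (Odd n → (Even x ↔ Odd (P (n-1)))) :=
  crosscap_stmt7_general p q n a P Q hpodd h0 hpos hlast hP0 hP1 hPr hQ0 hQ1 hQr hPn hQn
end

section
/- Define N(x,y) for coprime positive integers x, y as follows: write x/y = [a_0, ..., a_n] (a_0 ≥ 0, a_i > 0 for i ≥ 1, a_n > 1), set b_0 = a_0, and for i ≥ 1 set b_i = 0 if b_{i-1} = a_{i-1} and b_0 + ... + b_{i-1} is even, and b_i = a_i otherwise; then N(x,y) = (b_0 + ... + b_n)/2. Claim: for coprime odd positive integers p > q > 1, if the pair (p,q) is of type A (the unique solution x of xq ≡ -1 mod p with 0 < x < p is even), then N(pq-1, p^2) + 1 = N(pq+1, p^2). -/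
/-- 2x2 matrix as 4-tuple (top-left, top-right, bottom-left, bottom-right). -/
def hmul (m n : ℤ × ℤ × ℤ × ℤ) : ℤ × ℤ × ℤ × ℤ :=
  (m.1 * n.1 + m.2.1 * n.2.2.1, m.1 * n.2.1 + m.2.1 * n.2.2.2,
   m.2.2.1 * n.1 + m.2.2.2 * n.2.2.1, m.2.2.1 * n.2.1 + m.2.2.2 * n.2.2.2)

/-- Continuant matrix of a continued fraction word. -/
def Hm : List ℤ → ℤ × ℤ × ℤ × ℤ
  | [] => (1, 0, 0, 1)
  | a :: l => (a * (Hm l).1 + (Hm l).2.2.1, a * (Hm l).2.1 + (Hm l).2.2.2, (Hm l).1, (Hm l).2.1)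

lemma Hm_cons (a : ℤ) (l : List ℤ) : Hm (a :: l) = hmul (a, 1, 1, 0) (Hm l) := by
  simp [Hm, hmul]

lemma Hm_append (X Y : List ℤ) : Hm (X ++ Y) = hmul (Hm X) (Hm Y) := by
  induction X with
  | nil => simp [Hm, hmul]
  | cons a t ih =>
      simp only [List.cons_append, Hm_cons, ih]
      simp only [hmul]
      refine Prod.ext ?_ (Prod.ext ?_ (Prod.ext ?_ ?_)) <;> simp <;> ring

lemma Hm_reverse (l : List ℤ) :
    Hm l.reverse = ((Hm l).1, (Hm l).2.2.1, (Hm l).2.1, (Hm l).2.2.2) := by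
  induction l with
  | nil => simp [Hm]
  | cons a t ih =>
      rw [List.reverse_cons, Hm_append, ih, Hm_cons]
      simp only [Hm, hmul]
      refine Prod.ext ?_ (Prod.ext ?_ (Prod.ext ?_ ?_)) <;> simp <;> ring

lemma Hm_det (l : List ℤ) :
    (Hm l).1 * (Hm l).2.2.2 - (Hm l).2.1 * (Hm l).2.2.1 = (-1) ^ l.length := by
  induction l with
  | nil => simp [Hm]
  | cons a t ih => simp [Hm, pow_succ]; ring_nf; ring_nf at ih; linarith

lemma Hm_nonneg (l : List ℤ) (h : ∀ x ∈ l, 0 < x) :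
    0 ≤ (Hm l).1 ∧ 0 ≤ (Hm l).2.1 ∧ 0 ≤ (Hm l).2.2.1 ∧ 0 ≤ (Hm l).2.2.2 := by
  induction l with
  | nil => simp [Hm]
  | cons a t ih =>
      have ha : 0 < a := h a (by simp)
      have ih' := ih (fun x hx => h x (by simp [hx]))
      refine ⟨?_, ?_, ih'.1, ih'.2.1⟩ <;> simp [Hm] <;> nlinarith [ih'.1, ih'.2.1, ih'.2.2.1, ih'.2.2.2]

lemma Hm_num_pos (l : List ℤ) (h : ∀ x ∈ l, 0 < x) : 0 < (Hm l).1 := by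
  induction l with
  | nil => simp [Hm]
  | cons a t ih =>
      have ha : 0 < a := h a (by simp)
      have ih' := ih (fun x hx => h x (by simp [hx]))
      have hn := Hm_nonneg t (fun x hx => h x (by simp [hx]))
      simp only [Hm]; nlinarith [hn.2.2.1]

lemma Hm_den_pos (l : List ℤ) (hne : l ≠ []) (h : ∀ x ∈ l, 0 < x) : 0 < (Hm l).2.2.1 := by
  cases l with
  | nil => simp at hne
  | cons a t =>
      simp only [Hm]
      exact Hm_num_pos t (fun x hx => h x (by simp [hx]))

lemma getLast!_concat (l : List ℤ) (a : ℤ) : (l ++ [a]).getLast! = a := by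
  induction l with
  | nil => rfl
  | cons x t ih => cases t with
    | nil => rfl
    | cons y u => simpa using ih



lemma cf_cons_cons (a b : ℤ) (l : List ℤ) : cf (a :: b :: l) = (a : ℚ) + (cf (b :: l))⁻¹ := rfl

lemma getLast!_cons_of_ne (a : ℤ) (t : List ℤ) (h : t ≠ []) :
    (a :: t).getLast! = t.getLast! := by
  cases t with
  | nil => simp at h
  | cons b u => rfl

lemma cf_gt_one (l : List ℤ) (hne : l ≠ []) (hpos : ∀ x ∈ l, 0 < x) (hlast : 1 < l.getLast!) :
    1 < cf l := by
  induction l with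
  | nil => simp at hne
  | cons a t ih =>
      cases t with
      | nil =>
          simp only [cf]
          have : ([a] : List ℤ).getLast! = a := rfl
          rw [this] at hlast
          exact_mod_cast hlast
      | cons b u =>
          have ht : 1 < cf (b :: u) := by
            refine ih (by simp) (fun x hx => hpos x (List.mem_cons_of_mem a hx)) ?_
            rwa [getLast!_cons_of_ne a (b :: u) (by simp)] at hlast
          have ha : 1 ≤ a := hpos a (by simp)
          rw [cf_cons_cons]
          have h0 : 0 < (cf (b :: u))⁻¹ := by positivity
          have : (1:ℚ) ≤ a := by exact_mod_cast ha
          linarith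

lemma cf_pos (l : List ℤ) (hne : l ≠ []) (hpos : ∀ x ∈ l, 0 < x) : 0 < cf l := by
  induction l with
  | nil => simp at hne
  | cons a t ih =>
      have ha : 0 < a := hpos a (by simp)
      cases t with
      | nil => simp only [cf]; exact_mod_cast ha
      | cons b u =>
          have ht : 0 < cf (b :: u) := ih (by simp) (fun x hx => hpos x (List.mem_cons_of_mem a hx))
          rw [cf_cons_cons]
          have : (0:ℚ) < a := by exact_mod_cast ha
          positivity

lemma cf_unique : ∀ (l l' : List ℤ), ValidCF l → ValidCF l' → cf l = cf l' → l = l' := by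
  intro l
  induction l with
  | nil => intro l' hl; exact absurd rfl hl.1
  | cons a t ih =>
      intro l' hl hl' hcf
      obtain ⟨-, ha0, htpos, hlast⟩ := hl
      cases l' with
      | nil => exact absurd rfl hl'.1
      | cons a' t' =>
          obtain ⟨-, ha0', htpos', hlast'⟩ := hl'
          -- fractional parts
          have key : ∀ (x : ℤ) (s : List ℤ), 0 ≤ x → (∀ y ∈ s, 0 < y) →
              (s ≠ [] → 1 < s.getLast!) → cf (x :: s) = (x : ℚ) + (if s = [] then 0 else (cf s)⁻¹) := by
            intro x s hx hs hlast
            cases s with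
            | nil => simp [cf]
            | cons b u => simp [cf_cons_cons]
          have e1 := key a t (by simpa using ha0) htpos
            (fun h => by rwa [getLast!_cons_of_ne a t h] at hlast)
          have e2 := key a' t' (by simpa using ha0') htpos'
            (fun h => by rwa [getLast!_cons_of_ne a' t' h] at hlast')
          -- bounds on fractional parts
          have frac_bounds : ∀ (s : List ℤ), (∀ y ∈ s, 0 < y) → (s ≠ [] → 1 < s.getLast!) →
              0 ≤ (if s = [] then (0:ℚ) else (cf s)⁻¹) ∧ (if s = [] then (0:ℚ) else (cf s)⁻¹) < 1 := by
            intro s hs hl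
            split
            · norm_num
            · next h =>
              have := cf_gt_one s h hs (hl h)
              constructor
              · positivity
              · rw [inv_lt_one_iff₀]; right; exact this
          have b1 := frac_bounds t htpos (fun h => by rwa [getLast!_cons_of_ne a t h] at hlast)
          have b2 := frac_bounds t' htpos' (fun h => by rwa [getLast!_cons_of_ne a' t' h] at hlast')
          rw [e1, e2] at hcf
          have haa : a = a' := by
            have h1 : ((a : ℚ) - a') = (if t' = [] then (0:ℚ) else (cf t')⁻¹) - (if t = [] then (0:ℚ) else (cf t)⁻¹) := by linarith
            have h2 : ((a - a' : ℤ) : ℚ) < 1 := by push_cast; linarith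
            have h3 : (-1 : ℚ) < ((a - a' : ℤ) : ℚ) := by push_cast; linarith
            have h2' : (a - a' : ℤ) < 1 := by exact_mod_cast h2
            have h3' : (-1 : ℤ) < a - a' := by exact_mod_cast h3
            omega
          subst haa
          have hfr : (if t = [] then (0:ℚ) else (cf t)⁻¹) = (if t' = [] then (0:ℚ) else (cf t')⁻¹) := by
            linarith
          cases t with
          | nil =>
              cases t' with
              | nil => rfl
              | cons b' u' =>
                  exfalso
                  simp only [if_pos rfl, if_neg (by simp : (b' :: u') ≠ [])] at hfr
                  norm_num at hfr
                  have := cf_gt_one (b' :: u') (by simp) htpos'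
                    (by rwa [getLast!_cons_of_ne a (b' :: u') (by simp)] at hlast')
                  have : 0 < (cf (b' :: u'))⁻¹ := by positivity
                  linarith
          | cons b u =>
              cases t' with
              | nil =>
                  exfalso
                  simp only [if_neg (by simp : (b :: u) ≠ []), if_pos rfl] at hfr
                  norm_num at hfr
                  have := cf_gt_one (b :: u) (by simp) htpos
                    (by rwa [getLast!_cons_of_ne a (b :: u) (by simp)] at hlast)
                  have : 0 < (cf (b :: u))⁻¹ := by positivity
                  linarith
              | cons b' u' =>
                  simp only [if_neg (by simp : (b :: u) ≠ []), if_neg (by simp : (b' :: u') ≠ [])] at hfr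
                  have hc1 : 0 < cf (b :: u) := cf_pos _ (by simp) htpos
                  have hc2 : 0 < cf (b' :: u') := cf_pos _ (by simp) htpos'
                  have hcc : cf (b :: u) = cf (b' :: u') := by
                    have := inv_injective hfr; exact this
                  have hv1 : ValidCF (b :: u) := ⟨by simp, by simpa using le_of_lt (htpos b (by simp)),
                    fun x hx => htpos x (List.mem_cons_of_mem b (by simpa using hx)),
                    by rwa [getLast!_cons_of_ne a (b :: u) (by simp)] at hlast⟩
                  have hv2 : ValidCF (b' :: u') := ⟨by simp, by simpa using le_of_lt (htpos' b' (by simp)),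
                    fun x hx => htpos' x (List.mem_cons_of_mem b' (by simpa using hx)),
                    by rwa [getLast!_cons_of_ne a (b' :: u') (by simp)] at hlast'⟩
                  have := ih (b' :: u') hv1 hv2 hcc
                  rw [this]

lemma Hm_cons_num (a : ℤ) (l : List ℤ) : (Hm (a :: l)).1 = a * (Hm l).1 + (Hm l).2.2.1 := rfl
lemma Hm_cons_den (a : ℤ) (l : List ℤ) : (Hm (a :: l)).2.2.1 = (Hm l).1 := rfl

-- cf = num / den
lemma cf_eq_H (l : List ℤ) (hne : l ≠ []) (hpos : ∀ x ∈ l, 0 < x) :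
    cf l = ((Hm l).1 : ℚ) / ((Hm l).2.2.1 : ℚ) := by
  induction l with
  | nil => simp at hne
  | cons a t ih =>
      cases t with
      | nil =>
          show ((a:ℚ)) = _
          simp [Hm]
      | cons b u =>
          have hpos' : ∀ x ∈ b :: u, 0 < x := fun x hx => hpos x (List.mem_cons_of_mem a hx)
          have ih' := ih (by simp) hpos'
          have hnum : (0:ℤ) < (Hm (b :: u)).1 := Hm_num_pos _ hpos'
          have hden : (0:ℤ) < (Hm (b :: u)).2.2.1 := Hm_den_pos _ (by simp) hpos'
          show (a:ℚ) + (cf (b :: u))⁻¹ = _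
          rw [ih', Hm_cons_num a (b :: u), Hm_cons_den a (b :: u)]
          have h1 : ((Hm (b :: u)).1 : ℚ) ≠ 0 := by positivity
          have h2 : ((Hm (b :: u)).2.2.1 : ℚ) ≠ 0 := by positivity
          push_cast
          field_simp

-- fold machinery
def nstep (st : ℤ × ℤ × ℤ) (a : ℤ) : ℤ × ℤ × ℤ :=
  (a, if st.2.1 = st.1 ∧ Even st.2.2 then 0 else a,
   st.2.2 + if st.2.1 = st.1 ∧ Even st.2.2 then 0 else a)

lemma NsumAux_eq_foldl (t : List ℤ) : ∀ pa pb s, NsumAux pa pb s t = (t.foldl nstep (pa, pb, s)).2.2 := by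
  induction t with
  | nil => intro pa pb s; rfl
  | cons a u ih =>
      intro pa pb s
      show NsumAux a _ _ u = (u.foldl nstep (nstep (pa, pb, s) a)).2.2
      rw [ih]
      rfl

lemma Nsum_cons_eq (a : ℤ) (t : List ℤ) : Nsum (a :: t) = (t.foldl nstep (a, a, a)).2.2 := by
  show NsumAux a a a t = _
  exact NsumAux_eq_foldl t a a a

-- difference preservation
lemma foldl_diff (S : List ℤ) : ∀ (σ σ' : ℤ × ℤ × ℤ),
    ((σ.2.1 = σ.1) ↔ (σ'.2.1 = σ'.1)) → (Even σ.2.2 ↔ Even σ'.2.2) →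
    (S.foldl nstep σ').2.2 - (S.foldl nstep σ).2.2 = σ'.2.2 - σ.2.2 := by
  induction S with
  | nil => intro σ σ' h1 h2; rfl
  | cons a u ih =>
      intro σ σ' h1 h2
      rw [List.foldl_cons, List.foldl_cons]
      have hcond : (σ.2.1 = σ.1 ∧ Even σ.2.2) ↔ (σ'.2.1 = σ'.1 ∧ Even σ'.2.2) := by
        rw [h1, h2]
      have hb : (if σ.2.1 = σ.1 ∧ Even σ.2.2 then (0:ℤ) else a)
          = (if σ'.2.1 = σ'.1 ∧ Even σ'.2.2 then (0:ℤ) else a) := by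
        exact if_congr hcond rfl rfl
      have := ih (nstep σ a) (nstep σ' a) ?_ ?_
      · rw [this]
        simp only [nstep]
        rw [← hb]
        ring
      · simp only [nstep, ← hb]
      · simp only [nstep, ← hb]
        rw [Int.even_add, Int.even_add]
        tauto

-- single step of the invariant
lemma inv_step (n1 r1 d1 s1 a pa pb s : ℤ) (ha : 0 < a)
    (hodd : Odd (n1 * s1 - r1 * d1))
    (h1 : Even d1 → (pb = pa ∧ Even s))
    (h2 : ¬Even d1 → Even s1 → (pb ≠ pa ∧ Even s))
    (h3 : ¬Even d1 → ¬Even s1 → (pb = pa ∧ ¬Even s)) :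
    (Even (d1*a+s1) → ((if pb = pa ∧ Even s then (0:ℤ) else a) = a ∧ Even (s + if pb = pa ∧ Even s then (0:ℤ) else a))) ∧
    (¬Even (d1*a+s1) → Even d1 → ((if pb = pa ∧ Even s then (0:ℤ) else a) ≠ a ∧ Even (s + if pb = pa ∧ Even s then (0:ℤ) else a))) ∧
    (¬Even (d1*a+s1) → ¬Even d1 → ((if pb = pa ∧ Even s then (0:ℤ) else a) = a ∧ ¬Even (s + if pb = pa ∧ Even s then (0:ℤ) else a))) := by
  by_cases hd : Even d1
  · have hs1 : ¬ Even s1 := by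
      intro hs1
      have : Even (n1 * s1 - r1 * d1) := by
        have e1 : Even (n1 * s1) := hs1.mul_left n1
        have e2 : Even (r1 * d1) := hd.mul_left r1
        exact e1.sub e2
      exact (Int.not_even_iff_odd.mpr hodd) this
    obtain ⟨hpp, hes⟩ := h1 hd
    have hb : (if pb = pa ∧ Even s then (0:ℤ) else a) = 0 := if_pos ⟨hpp, hes⟩
    rw [hb]
    have hpar : ¬ Even (d1*a+s1) := by
      intro h
      have : Even (d1*a) := hd.mul_right a
      rcases this with ⟨k, hk⟩; rcases h with ⟨m, hm⟩
      exact hs1 ⟨m - k, by omega⟩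
    exact ⟨fun h => absurd h hpar, fun _ _ => ⟨by omega, by simpa using hes⟩,
      fun _ hnd => absurd hd hnd⟩
  · by_cases hs1 : Even s1
    · obtain ⟨hpp, hes⟩ := h2 hd hs1
      have hb : (if pb = pa ∧ Even s then (0:ℤ) else a) = a := if_neg (by tauto)
      rw [hb]
      have hpar : Even (d1*a+s1) ↔ Even a := by
        constructor
        · intro h
          rcases hs1 with ⟨m, hm⟩
          have : Even (d1 * a) := by
            rcases h with ⟨k, hk⟩; exact ⟨k - m, by omega⟩
          rcases (Int.even_mul.mp this) with h' | h'
          · exact absurd h' hd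
          · exact h'
        · intro h
          exact ((h.mul_left d1).add hs1)
      refine ⟨fun h => ⟨rfl, ?_⟩, fun h hd' => absurd hd' hd, fun h _ => ⟨rfl, ?_⟩⟩
      · exact hes.add (hpar.mp h)
      · intro hc
        have hae : ¬ Even a := fun hea => h (hpar.mpr hea)
        rcases hes with ⟨m, hm⟩; rcases hc with ⟨k, hk⟩
        exact hae ⟨k - m, by omega⟩
    · obtain ⟨hpp, hos⟩ := h3 hd hs1
      have hb : (if pb = pa ∧ Even s then (0:ℤ) else a) = a := if_neg (by tauto)
      rw [hb]
      have hpar : Even (d1*a+s1) ↔ ¬ Even a := by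
        constructor
        · intro h hea
          have : Even (d1 * a) := hea.mul_left d1
          rcases this with ⟨k, hk⟩; rcases h with ⟨m, hm⟩
          exact hs1 ⟨m - k, by omega⟩
        · intro hna
          have hda : ¬ Even (d1 * a) := by
            rw [Int.even_mul]; tauto
          rcases Int.not_even_iff_odd.mp hda with ⟨k, hk⟩
          rcases Int.not_even_iff_odd.mp hs1 with ⟨m, hm⟩
          exact ⟨k + m + 1, by omega⟩
      refine ⟨fun h => ⟨rfl, ?_⟩, fun h hd' => absurd hd' hd, fun h _ => ⟨rfl, ?_⟩⟩
      · have hna : ¬ Even a := hpar.mp h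
        rcases Int.not_even_iff_odd.mp hos with ⟨m, hm⟩
        rcases Int.not_even_iff_odd.mp hna with ⟨k, hk⟩
        exact ⟨m + k + 1, by omega⟩
      · have hea : Even a := by
          by_contra hna
          exact h (hpar.mpr hna)
        intro hc
        rcases hea with ⟨k, hk⟩; rcases hc with ⟨m, hm⟩
        exact hos ⟨m - k, by omega⟩

-- state invariant
lemma state_inv (A : List ℤ) (hpos : ∀ x ∈ A, 0 < x) :
    (Even (Hm A).2.2.1 → ((A.foldl nstep (0,0,0)).2.1 = (A.foldl nstep (0,0,0)).1 ∧ Even (A.foldl nstep (0,0,0)).2.2)) ∧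
    (¬ Even (Hm A).2.2.1 → Even (Hm A).2.2.2 → ((A.foldl nstep (0,0,0)).2.1 ≠ (A.foldl nstep (0,0,0)).1 ∧ Even (A.foldl nstep (0,0,0)).2.2)) ∧
    (¬ Even (Hm A).2.2.1 → ¬ Even (Hm A).2.2.2 → ((A.foldl nstep (0,0,0)).2.1 = (A.foldl nstep (0,0,0)).1 ∧ ¬ Even (A.foldl nstep (0,0,0)).2.2)) := by
  induction A using List.reverseRecOn with
  | nil => simp [Hm, nstep]
  | append_singleton A a ih =>
      have hpos' : ∀ x ∈ A, 0 < x := fun x hx => hpos x (by simp [hx])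
      have ha : 0 < a := hpos a (by simp)
      have ih' := ih hpos'
      have hodd : Odd ((Hm A).1 * (Hm A).2.2.2 - (Hm A).2.1 * (Hm A).2.2.1) := by
        rw [Hm_det]
        exact Odd.pow ⟨-1, by ring⟩
      have hH : Hm (A ++ [a]) = hmul (Hm A) (a, 1, 1, 0) := by
        rw [Hm_append]
        congr 1
        simp [Hm]
      have hfold : (A ++ [a]).foldl nstep (0,0,0) = nstep (A.foldl nstep (0,0,0)) a := by
        rw [List.foldl_append]; rfl
      rw [hH, hfold]
      have key := inv_step (Hm A).1 (Hm A).2.1 (Hm A).2.2.1 (Hm A).2.2.2 a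
        (A.foldl nstep (0,0,0)).1 (A.foldl nstep (0,0,0)).2.1 (A.foldl nstep (0,0,0)).2.2
        ha hodd ih'.1 ih'.2.1 ih'.2.2
      simpa [hmul, nstep, mul_comm] using key

/-- Continued fraction digits of p/q by the Euclidean algorithm. -/
def euc : ℕ → ℕ → List ℤ
  | _, 0 => []
  | p, (q+1) => ((p / (q+1) : ℕ) : ℤ) :: euc (q+1) (p % (q+1))
  termination_by p q => q
  decreasing_by exact Nat.mod_lt _ (Nat.succ_pos q)

lemma euc_spec : ∀ q p : ℕ, 0 < q → q < p → Nat.gcd p q = 1 →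
    euc p q ≠ [] ∧ (∀ x ∈ euc p q, 0 < x) ∧ 1 < (euc p q).getLast! ∧
    (Hm (euc p q)).1 = (p : ℤ) ∧ (Hm (euc p q)).2.2.1 = (q : ℤ) ∧
    (1 < q → (euc p q).dropLast ≠ []) := by
  intro q
  induction q using Nat.strong_induction_on with
  | _ q ih =>
    intro p hq hqp hgcd
    obtain ⟨q', rfl⟩ : ∃ q', q = q' + 1 := ⟨q - 1, by omega⟩
    set Q := q' + 1 with hQ
    have hne : euc p Q ≠ [] := by rw [euc]; simp
    have heq : euc p Q = ((p / Q : ℕ) : ℤ) :: euc Q (p % Q) := by rw [euc]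
    by_cases hr : p % Q = 0
    · -- Q divides p, so Q = 1 and list is [p]
      have hdvd : Q ∣ p := Nat.dvd_of_mod_eq_zero hr
      have hQ1 : Q = 1 := by
        have := Nat.gcd_eq_right hdvd
        omega
      have hlist : euc p Q = [(p : ℤ)] := by
        rw [heq, hr, hQ1]
        simp [euc]
      rw [hlist]
      refine ⟨by simp, ?_, ?_, ?_, ?_, ?_⟩
      · intro x hx; simp at hx; subst hx; exact_mod_cast Nat.lt_of_lt_of_le hq (le_of_lt hqp)
      · show 1 < ([(p:ℤ)]).getLast!
        have : ([(p:ℤ)]).getLast! = (p : ℤ) := rfl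
        rw [this]; exact_mod_cast by omega
      · simp [Hm]
      · simp [Hm, hQ1]
      · intro h; omega
    · -- recursive case
      have hrec := ih (p % Q) (Nat.mod_lt _ (by omega)) Q (by omega) (Nat.mod_lt _ (by omega)) ?gcd
      case gcd =>
        have h1 : Nat.gcd Q p = 1 := by rwa [Nat.gcd_comm]
        have := Nat.gcd_rec Q p
        rw [h1] at this
        rw [Nat.gcd_comm]
        omega
      obtain ⟨tne, tpos, tlast, tnum, tden, -⟩ := hrec
      have hdiv1 : 1 ≤ p / Q := (Nat.one_le_div_iff (by omega)).mpr (by omega)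
      rw [heq]
      refine ⟨by simp, ?_, ?_, ?_, ?_, ?_⟩
      · intro x hx
        rcases List.mem_cons.mp hx with rfl | hx'
        · exact_mod_cast hdiv1
        · exact tpos x hx'
      · rw [getLast!_cons_of_ne _ _ tne]; exact tlast
      · show ((p / Q : ℕ) : ℤ) * (Hm (euc Q (p % Q))).1 + (Hm (euc Q (p % Q))).2.2.1 = (p : ℤ)
        rw [tnum, tden]
        have h0 := Nat.div_add_mod p Q
        have : ((p / Q : ℕ) : ℤ) * (Q : ℤ) + ((p % Q : ℕ) : ℤ) = (p : ℤ) := by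
          rw [mul_comm]
          exact_mod_cast h0
        linarith
      · show (Hm (euc Q (p % Q))).1 = (Q : ℤ)
        exact tnum
      · intro _
        cases h : euc Q (p % Q) with
        | nil => exact absurd h tne
        | cons b u => simp [h]

lemma middle_step (p' r q' s an e : ℤ) (σ : ℤ × ℤ × ℤ)
    (hdetA : p' * s - r * q' = -e)
    (he : e = 1 ∨ e = -1)
    (hPodd : ¬ Even (p' * an + r)) (hQodd : ¬ Even (q' * an + s))
    (hTA : Even p' ↔ e = 1)
    (han : 2 ≤ an)
    (hinv1 : Even q' → (σ.2.1 = σ.1 ∧ Even σ.2.2))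
    (hinv2 : ¬Even q' → Even s → (σ.2.1 ≠ σ.1 ∧ Even σ.2.2))
    (hinv3 : ¬Even q' → ¬Even s → (σ.2.1 = σ.1 ∧ ¬Even σ.2.2)) :
    (((nstep (nstep σ (an + e)) (an - e)).2.1 = (nstep (nstep σ (an + e)) (an - e)).1) ↔
      ((nstep (nstep σ (an - e)) (an + e)).2.1 = (nstep (nstep σ (an - e)) (an + e)).1)) ∧
    (Even (nstep (nstep σ (an + e)) (an - e)).2.2 ↔ Even (nstep (nstep σ (an - e)) (an + e)).2.2) ∧
    (nstep (nstep σ (an + e)) (an - e)).2.2 = (nstep (nstep σ (an - e)) (an + e)).2.2 + 2 := by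
  have hoe : Odd e := by rcases he with rfl | rfl <;> decide
  by_cases hq' : Even q'
  · -- q' even: state (pb=pa, even); skip then take; e = -1
    have hps : Odd (p' * s) := by
      have h1 : p' * s = r * q' - e := by linarith
      rw [h1]
      exact (hq'.mul_left r).sub_odd hoe
    have hp' : ¬ Even p' := by
      rcases Int.even_or_odd p' with h | h
      · exact absurd (h.mul_right s) (Int.not_even_iff_odd.mpr hps)
      · exact Int.not_even_iff_odd.mpr h
    have he' : e = -1 := by
      rcases he with rfl | rfl
      · exact absurd (hTA.mpr rfl) hp'
      · rfl
    subst he'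
    obtain ⟨hpp, ht⟩ := hinv1 hq'
    have E1 : ∀ z : ℤ, nstep σ z = (z, 0, σ.2.2) := by
      intro z; simp [nstep, hpp, ht]
    have E2 : ∀ z w : ℤ, 0 < z → nstep (z, 0, σ.2.2) w = (w, w, σ.2.2 + w) := by
      intro z w hz
      have : ¬ ((0:ℤ) = z ∧ Even σ.2.2) := by rintro ⟨h, -⟩; omega
      simp [nstep, this]
    rw [E1, E1, E2 _ _ (by omega), E2 _ _ (by omega)]
    refine ⟨by constructor <;> intro <;> rfl, ?_, by ring⟩
    simp only []
    rw [Int.even_iff, Int.even_iff]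
    omega
  · by_cases hs : Even s
    · -- q' odd, s even: state (pb≠pa, even); take then skip; e = 1
      obtain ⟨hpp, ht⟩ := hinv2 hq' hs
      have hr : ¬ Even r := by
        have h1 : Odd (r * q') := by
          have : r * q' = p' * s + e := by linarith
          rw [this]
          exact (hs.mul_left p').add_odd hoe
        rcases Int.even_or_odd r with h | h
        · exact absurd (h.mul_right q') (Int.not_even_iff_odd.mpr h1)
        · exact Int.not_even_iff_odd.mpr h
      have han_odd : ¬ Even an := by
        intro h
        exact hQodd ((h.mul_left q').add hs)
      have hp' : Even p' := by
        have h1 : Even (p' * an) := by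
          rcases Int.not_even_iff_odd.mp hPodd with ⟨k, hk⟩
          rcases Int.not_even_iff_odd.mp hr with ⟨m, hm⟩
          exact ⟨k - m, by omega⟩
        rcases Int.even_mul.mp h1 with h | h
        · exact h
        · exact absurd h han_odd
      have he' : e = 1 := hTA.mp hp'
      subst he'
      have E1 : ∀ z : ℤ, nstep σ z = (z, z, σ.2.2 + z) := by
        intro z
        have : ¬ (σ.2.1 = σ.1 ∧ Even σ.2.2) := by rintro ⟨h, -⟩; exact hpp h
        simp [nstep, this]
      have E2 : ∀ z w : ℤ, Even (σ.2.2 + z) → nstep (z, z, σ.2.2 + z) w = (w, 0, σ.2.2 + z) := by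
        intro z w hz
        simp [nstep, hz]
      have hev : ∀ z : ℤ, Even z → Even (σ.2.2 + z) := by
        intro z hz
        simp only [Int.even_iff] at ht hz ⊢
        omega
      rw [E1, E1, E2 _ _ (hev _ (by simp only [Int.even_iff] at han_odd ⊢; omega)),
          E2 _ _ (hev _ (by simp only [Int.even_iff] at han_odd ⊢; omega))]
      · refine ⟨?_, ?_, by simp only []; ring⟩
        · simp only []
          constructor <;> intro h <;> omega
        · simp only []
          rw [Int.even_iff, Int.even_iff]
          omega
    · -- q' odd, s odd: state (pb=pa, odd); take then skip; e = 1
      obtain ⟨hpp, ht⟩ := hinv3 hq' hs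
      have han_even : Even an := by
        have h1 : Even (q' * an) := by
          rcases Int.not_even_iff_odd.mp hQodd with ⟨k, hk⟩
          rcases Int.not_even_iff_odd.mp hs with ⟨m, hm⟩
          exact ⟨k - m, by omega⟩
        rcases Int.even_mul.mp h1 with h | h
        · exact absurd h hq'
        · exact h
      have hr : ¬ Even r := by
        intro h
        exact hPodd (((han_even.mul_left p')).add h)
      have hp' : Even p' := by
        have h1 : Even (p' * s) := by
          have heq : p' * s = r * q' - e := by linarith
          rw [heq]
          rcases Int.not_even_iff_odd.mp hr with ⟨k, hk⟩
          rcases Int.not_even_iff_odd.mp hq' with ⟨m, hm⟩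
          rcases hoe with ⟨j, hj⟩
          exact ⟨2*k*m + k + m - j, by rw [hk, hm, hj]; ring⟩
        rcases Int.even_mul.mp h1 with h | h
        · exact h
        · exact absurd h hs
      have he' : e = 1 := hTA.mp hp'
      subst he'
      have E1 : ∀ z : ℤ, nstep σ z = (z, z, σ.2.2 + z) := by
        intro z
        have : ¬ (σ.2.1 = σ.1 ∧ Even σ.2.2) := by rintro ⟨-, h⟩; exact ht h
        simp [nstep, this]
      have E2 : ∀ z w : ℤ, Even (σ.2.2 + z) → nstep (z, z, σ.2.2 + z) w = (w, 0, σ.2.2 + z) := by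
        intro z w hz
        simp [nstep, hz]
      have hev : ∀ z : ℤ, ¬ Even z → Even (σ.2.2 + z) := by
        intro z hz
        simp only [Int.even_iff] at ht hz ⊢
        omega
      rw [E1, E1, E2 _ _ (hev _ (by simp only [Int.even_iff] at han_even ⊢; omega)),
          E2 _ _ (hev _ (by simp only [Int.even_iff] at han_even ⊢; omega))]
      · refine ⟨?_, ?_, by simp only []; ring⟩
        · simp only []
          constructor <;> intro h <;> omega
        · simp only []
          rw [Int.even_iff, Int.even_iff]
          omega

theorem crosscap_stmt10 (p q : ℕ) (hq : 1 < q) (hqp : q < p) (hcop : Nat.Coprime p q)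
    (hpodd : Odd p) (hqodd : Odd q)
    (htypeA : ∀ x : ℤ, 0 < x → x < p → (p : ℤ) ∣ x * q + 1 → Even x)
    (l1 l2 : List ℤ) (hl1 : ValidCF l1) (hl2 : ValidCF l2)
    (hc1 : cf l1 = ((p:ℚ) * q - 1) / (p:ℚ)^2)
    (hc2 : cf l2 = ((p:ℚ) * q + 1) / (p:ℚ)^2) :
    Nsum l1 / 2 + 1 = Nsum l2 / 2 := by
  obtain ⟨hA0ne, hA0pos, hA0last, hA0num, hA0den, hA0drop⟩ :=
    euc_spec q p (by omega) hqp hcop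
  set A0 := euc p q with hA0def
  have hAne : A0.dropLast ≠ [] := hA0drop hq
  set A := A0.dropLast with hAdef
  set an := A0.getLast hA0ne with handef
  have hA0eq : A ++ [an] = A0 := List.dropLast_append_getLast hA0ne
  have han_last : A0.getLast! = an := by rw [← hA0eq]; exact getLast!_concat A an
  have han2 : 2 ≤ an := by rw [han_last] at hA0last; omega
  have hApos : ∀ x ∈ A, 0 < x := fun x hx =>
    hA0pos x (by rw [← hA0eq]; exact List.mem_append_left _ hx)
  set p' := (Hm A).1 with hp'def
  set r := (Hm A).2.1 with hrdef
  set q' := (Hm A).2.2.1 with hq'def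
  set s := (Hm A).2.2.2 with hsdef
  have hHmA0 : Hm A0 = hmul (Hm A) (an, 1, 1, 0) := by
    rw [← hA0eq, Hm_append]
    congr 1
    simp [Hm]
  have hPeq : (p:ℤ) = p' * an + r := by
    rw [hHmA0] at hA0num
    simp only [hmul] at hA0num
    linarith [hA0num]
  have hQeq : (q:ℤ) = q' * an + s := by
    rw [hHmA0] at hA0den
    simp only [hmul] at hA0den
    linarith [hA0den]
  have h21 : (Hm A0).2.1 = p' := by rw [hHmA0]; simp [hmul, hp'def]
  have h22 : (Hm A0).2.2.2 = q' := by rw [hHmA0]; simp [hmul, hq'def]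
  have hdetA0 : (p:ℤ) * q' - p' * (q:ℤ) = (-1:ℤ)^(A0.length) := by
    have := Hm_det A0
    rwa [hA0num, hA0den, h21, h22] at this
  have hlen : A0.length = A.length + 1 := by rw [← hA0eq]; simp
  set e : ℤ := (-1:ℤ)^(A0.length) with hedef
  have he : e = 1 ∨ e = -1 := by
    rcases Nat.even_or_odd A0.length with h | h
    · left; rw [hedef]; exact Even.neg_one_pow h
    · right; rw [hedef]; exact Odd.neg_one_pow h
  have heparity : Even A0.length ↔ e = 1 := by
    constructor
    · intro h; rw [hedef]; exact Even.neg_one_pow h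
    · intro h1
      by_contra hne
      have : e = -1 := by
        rw [hedef]; exact Odd.neg_one_pow (Nat.odd_iff.mpr (by
          rcases Nat.even_or_odd A0.length with h | h
          · exact absurd h hne
          · exact Nat.odd_iff.mp h))
      omega
  have hdetA' : p' * s - r * q' = -e := by
    have := Hm_det A
    rw [← hp'def, ← hrdef, ← hq'def, ← hsdef] at this
    rw [this, hedef, hlen, pow_succ]
    ring
  have hp'pos : 0 < p' := Hm_num_pos A hApos
  have hrnn : 0 ≤ r := (Hm_nonneg A hApos).2.1
  have hp'ltp : p' < (p:ℤ) := by rw [hPeq]; nlinarith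
  have hPoddZ : ¬ Even ((p:ℤ)) := by
    rcases hpodd with ⟨j, hj⟩
    rintro ⟨k, hk⟩
    subst hj
    push_cast at hk
    omega
  have hQoddZ : ¬ Even ((q:ℤ)) := by
    rcases hqodd with ⟨j, hj⟩
    rintro ⟨k, hk⟩
    subst hj
    push_cast at hk
    omega
  have hTA : Even p' ↔ e = 1 := by
    constructor
    · intro hep
      rcases he with h1 | h1
      · exact h1
      · exfalso
        rw [h1] at hdetA0
        have hdvd : (p:ℤ) ∣ ((p:ℤ) - p') * q + 1 :=
          ⟨(q:ℤ) - q', by linear_combination hdetA0⟩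
        have := htypeA ((p:ℤ) - p') (by linarith) (by linarith) hdvd
        rcases this with ⟨k, hk⟩
        rcases hep with ⟨m, hm⟩
        exact hPoddZ ⟨k + m, by omega⟩
    · intro h1
      rw [h1] at hdetA0
      have hdvd : (p:ℤ) ∣ p' * q + 1 := ⟨q', by linear_combination -hdetA0⟩
      exact htypeA p' hp'pos hp'ltp hdvd
  have hPodd : ¬ Even (p' * an + r) := by rw [← hPeq]; exact hPoddZ
  have hQodd : ¬ Even (q' * an + s) := by rw [← hQeq]; exact hQoddZ
  -- decompose A
  obtain ⟨a1, B, hAeq⟩ : ∃ a1 B, A = a1 :: B := by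
    cases hA : A with
    | nil => exact absurd hA hAne
    | cons x t => exact ⟨x, t, rfl⟩
  -- build suffix
  obtain ⟨Z, c, hc2lt, hsufpos, hsnum, hsden⟩ :
      ∃ Z c, 1 < c ∧ (∀ x ∈ Z ++ [c], 0 < x) ∧
        (Hm (Z ++ [c])).1 = p' ∧ (Hm (Z ++ [c])).2.2.1 = r := by
    by_cases ha1 : a1 = 1
    · cases hB : B with
      | nil =>
          exfalso
          rw [hB, ha1] at hAeq
          have hA1 : Hm A = (1, 1, 1, 0) := by rw [hAeq]; simp [Hm]
          have e1 : p' = 1 := by rw [hp'def, hA1]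
          have e2 : r = 1 := by rw [hrdef, hA1]
          have e3 : q' = 1 := by rw [hq'def, hA1]
          have e4 : s = 0 := by rw [hsdef, hA1]
          rw [e1, e2] at hPeq
          rw [e3, e4] at hQeq
          rcases hpodd with ⟨j, hj⟩
          rcases hqodd with ⟨k, hk⟩
          have : (p:ℤ) = (q:ℤ) + 1 := by omega
          have : p = q + 1 := by exact_mod_cast this
          omega
      | cons b B2 =>
          refine ⟨B2.reverse, b + 1, ?_, ?_, ?_, ?_⟩
          · have : 0 < b := hApos b (by rw [hAeq, hB]; simp)
            omega
          · intro x hx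
            rcases List.mem_append.mp hx with hx' | hx'
            · exact hApos x (by rw [hAeq, hB]; simp; right; right; exact List.mem_reverse.mp hx')
            · simp at hx'
              have : 0 < b := hApos b (by rw [hAeq, hB]; simp)
              omega
          · have key : (Hm (B2.reverse ++ [b + 1])).1 = (Hm (B2.reverse ++ [b, 1])).1 := by
              rw [Hm_append, Hm_append]
              simp only [hmul, Hm]
              ring
            rw [key]
            have : B2.reverse ++ [b, 1] = A.reverse := by
              rw [hAeq, hB, ha1]
              simp
            rw [this, Hm_reverse]
          · have key : (Hm (B2.reverse ++ [b + 1])).2.2.1 = (Hm (B2.reverse ++ [b, 1])).2.2.1 := by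
              rw [Hm_append, Hm_append]
              simp only [hmul, Hm]
              ring
            rw [key]
            have : B2.reverse ++ [b, 1] = A.reverse := by
              rw [hAeq, hB, ha1]
              simp
            rw [this, Hm_reverse]
    · refine ⟨B.reverse, a1, ?_, ?_, ?_, ?_⟩
      · have : 0 < a1 := hApos a1 (by rw [hAeq]; simp)
        omega
      · intro x hx
        have : B.reverse ++ [a1] = A.reverse := by rw [hAeq]; simp
        rw [this] at hx
        exact hApos x (List.mem_reverse.mp hx)
      · have : B.reverse ++ [a1] = A.reverse := by rw [hAeq]; simp
        rw [this, Hm_reverse]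
      · have : B.reverse ++ [a1] = A.reverse := by rw [hAeq]; simp
        rw [this, Hm_reverse]
  set suf := Z ++ [c] with hsufdef
  -- the two candidate lists
  have main : ∀ e' : ℤ, e' = e ∨ e' = -e →
      ValidCF (0 :: (A ++ ([an - e', an + e'] ++ suf))) ∧
      cf (0 :: (A ++ ([an - e', an + e'] ++ suf))) = (((p:ℤ) * q - e' * e : ℤ) : ℚ) / (((p:ℤ)^2 : ℤ) : ℚ) := by
    intro e' he'
    have he'sq : e' * e' = 1 := by rcases he' with rfl | rfl <;> rcases he with h | h <;> rw [h] <;> ring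
    have he'bd : e' = 1 ∨ e' = -1 := by rcases he' with rfl | rfl <;> rcases he with h | h <;> omega
    set W := A ++ ([an - e', an + e'] ++ suf) with hWdef
    have hWpos : ∀ x ∈ W, 0 < x := by
      intro x hx
      rw [hWdef] at hx
      rcases List.mem_append.mp hx with hx' | hx'
      · exact hApos x hx'
      · rcases List.mem_append.mp hx' with hx'' | hx''
        · simp at hx''
          rcases hx'' with rfl | rfl <;> omega
        · exact hsufpos x hx''
    have hWne : W ≠ [] := by rw [hWdef, hAeq]; simp
    have hmid : Hm [an - e', an + e'] = ((an - e') * (an + e') + 1, an - e', an + e', 1) := by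
      simp only [Hm]
      refine Prod.ext ?_ (Prod.ext ?_ (Prod.ext ?_ ?_)) <;> simp <;> ring_nf
    have hHmW : Hm W = hmul (Hm A) (hmul (Hm [an - e', an + e']) (Hm suf)) := by
      rw [hWdef, Hm_append, Hm_append]
    have hWnum : (Hm W).1 = (p:ℤ)^2 := by
      rw [hHmW, hmid]
      simp only [hmul, hsnum, hsden]
      rw [hPeq]
      linear_combination (-(p' * p')) * he'sq
    have hWden : (Hm W).2.2.1 = (p:ℤ) * q - e' * e := by
      rw [hHmW, hmid]
      simp only [hmul, hsnum, hsden]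
      rw [hPeq, hQeq]
      linear_combination (-(q' * p')) * he'sq + e' * hdetA'
    have hcfW : cf W = (((p:ℤ)^2 : ℤ) : ℚ) / (((p:ℤ) * q - e' * e : ℤ) : ℚ) := by
      rw [cf_eq_H W hWne hWpos, hWnum, hWden]
    have hWcons : W = a1 :: (B ++ ([an - e', an + e'] ++ suf)) := by
      rw [hWdef, hAeq]; rfl
    have hgl : (0 :: W).getLast! = c := by
      have : (0:ℤ) :: W = ((0 :: A ++ [an - e', an + e']) ++ Z) ++ [c] := by
        rw [hWdef, hsufdef]; simp
      rw [this, getLast!_concat]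
    constructor
    · refine ⟨by simp, by simp, ?_, ?_⟩
      · intro x hx
        exact hWpos x (by simpa using hx)
      · rw [hgl]; exact hc2lt
    · have : cf (0 :: W) = 0 + (cf W)⁻¹ := by rw [hWcons]; rfl
      rw [this, hcfW, zero_add, inv_div]
  -- identify l1 and l2
  have hm1 := main e (Or.inl rfl)
  have hm2 := main (-e) (Or.inr rfl)
  have hee : e * e = 1 := by rcases he with h | h <;> rw [h] <;> ring
  have hl1eq : l1 = 0 :: (A ++ ([an - e, an + e] ++ suf)) := by
    apply cf_unique l1 _ hl1 hm1.1
    rw [hc1, hm1.2, hee]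
    push_cast
    ring_nf
  have hl2eq : l2 = 0 :: (A ++ ([an - -e, an + -e] ++ suf)) := by
    apply cf_unique l2 _ hl2 hm2.1
    rw [hc2, hm2.2]
    have : -e * e = -1 := by rcases he with h | h <;> rw [h] <;> ring
    rw [this]
    push_cast
    ring_nf
  -- Nsum difference
  set σA := A.foldl nstep ((0:ℤ), (0:ℤ), (0:ℤ)) with hσAdef
  have hNsum : ∀ x y : ℤ, Nsum (0 :: (A ++ ([x, y] ++ suf))) =
      (suf.foldl nstep (nstep (nstep σA x) y)).2.2 := by
    intro x y
    rw [Nsum_cons_eq, List.foldl_append, List.foldl_append]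
    rfl
  have hinv := state_inv A hApos
  have hmidstep := middle_step p' r q' s an e σA hdetA' he hPodd hQodd hTA han2
    hinv.1 hinv.2.1 hinv.2.2
  have hdiff := foldl_diff suf (nstep (nstep σA (an - e)) (an + e))
    (nstep (nstep σA (an + e)) (an - e)) hmidstep.1.symm hmidstep.2.1.symm
  have hfinal : Nsum l2 = Nsum l1 + 2 := by
    rw [hl1eq, hl2eq, hNsum, hNsum]
    have h1 : an - -e = an + e := by ring
    have h2 : an + -e = an - e := by ring
    rw [h1, h2]
    omega
  omega
end
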